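/- Suppose f: ℝᵐ → ℝ is convex and differentiable with L-Lipschitz continuous gradient, and has a minimizer x*. For the gradient descent iteration x^{k+1} = x^k − λ∇f(x^k) with fixed step size 0 < λ ≤ 1/L, it holds that f(x^k) − f(x*) ≤ ‖x⁰ − x*‖² / (2λk) for all k ≥ 1. -/

import Mathlib

open InnerProductSpace

local notation "⟪" x ", " y "⟫" => @inner ℝ _ _ x y

section aux

variable {m : ℕ}

private lemma line_hasDerivAt (f : EuclideanSpace ℝ (Fin m) → ℝ)
    (hf : Differentiable ℝ f) (a v : EuclideanSpace ℝ (Fin m)) (t : ℝ) :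
    HasDerivAt (fun s : ℝ => f (a + s • v)) ⟪gradient f (a + t • v), v⟫ t := by
  have h1 : HasFDerivAt f (toDual ℝ _ (gradient f (a + t • v))) (a + t • v) :=
    (hf _).hasGradientAt.hasFDerivAt
  have h2 : HasDerivAt (fun s : ℝ => a + s • v) v t := by
    simpa using ((hasDerivAt_id t).smul_const v).const_add a
  simpa [toDual_apply_apply, Function.comp_def] using h1.comp_hasDerivAt t h2

/-- First-order condition for convexity. -/
private lemma convex_first_order (f : EuclideanSpace ℝ (Fin m) → ℝ)
    (hconv : ConvexOn ℝ Set.univ f) (hf : Differentiable ℝ f)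
    (a b : EuclideanSpace ℝ (Fin m)) :
    f a + ⟪gradient f a, b - a⟫ ≤ f b := by
  set φ : ℝ → ℝ := fun s => f (a + s • (b - a)) with hφ
  have hder : HasDerivAt φ ⟪gradient f a, b - a⟫ 0 := by
    simpa using line_hasDerivAt f hf a (b - a) 0
  have hslope : Filter.Tendsto (slope φ 0) (nhdsWithin 0 (Set.Ioi 0))
      (nhds ⟪gradient f a, b - a⟫) := by
    have := hasDerivAt_iff_tendsto_slope.1 hder
    exact this.mono_left (nhdsWithin_mono _ (fun t ht => ne_of_gt ht))
  have hbound : ∀ᶠ t in nhdsWithin 0 (Set.Ioi 0), slope φ 0 t ≤ f b - f a := by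
    filter_upwards [Ioo_mem_nhdsGT_of_mem (by norm_num : (0:ℝ) ∈ Set.Ico 0 1)] with t ht
    have ht0 : 0 < t := ht.1
    have ht1 : t < 1 := ht.2
    have hc : f (a + t • (b - a)) ≤ (1 - t) * f a + t * f b := by
      have := hconv.2 (Set.mem_univ b) (Set.mem_univ a) (le_of_lt ht0)
        (by linarith : (0:ℝ) ≤ 1 - t) (by ring)
      have heq : t • b + (1 - t) • a = a + t • (b - a) := by
        module
      rw [heq] at this
      simp only [smul_eq_mul] at this
      linarith [this]
    have : φ t - φ 0 ≤ t * (f b - f a) := by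
      simp only [hφ, zero_smul, add_zero]
      nlinarith
    rw [slope_def_field, sub_zero, div_le_iff₀ ht0]
    linarith [this]
  have := le_of_tendsto hslope hbound
  linarith

/-- Descent lemma. -/
private lemma descent_lemma (f : EuclideanSpace ℝ (Fin m) → ℝ)
    (hf : Differentiable ℝ f) (L : ℝ) (hL : 0 < L)
    (hlip : ∀ x y, ‖gradient f x - gradient f y‖ ≤ L * ‖x - y‖)
    (a b : EuclideanSpace ℝ (Fin m)) :
    f b ≤ f a + ⟪gradient f a, b - a⟫ + L / 2 * ‖b - a‖ ^ 2 := by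
  set v := b - a with hv
  set g : ℝ → ℝ := fun t => f (a + t • v) - t * ⟪gradient f a, v⟫ - L / 2 * t ^ 2 * ‖v‖ ^ 2
    with hg
  have hgder : ∀ t : ℝ, HasDerivAt g
      (⟪gradient f (a + t • v), v⟫ - ⟪gradient f a, v⟫ - L * t * ‖v‖ ^ 2) t := by
    intro t
    have h1 := line_hasDerivAt f hf a v t
    have h2 : HasDerivAt (fun s : ℝ => s * ⟪gradient f a, v⟫) ⟪gradient f a, v⟫ t := by
      simpa using (hasDerivAt_id t).mul_const ⟪gradient f a, v⟫
    have h3 : HasDerivAt (fun s : ℝ => L / 2 * s ^ 2 * ‖v‖ ^ 2) (L * t * ‖v‖ ^ 2) t := by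
      have := ((hasDerivAt_pow 2 t).const_mul (L / 2)).mul_const (‖v‖ ^ 2)
      rw [show L * t * ‖v‖ ^ 2 = L / 2 * (((2:ℕ):ℝ) * t ^ (2 - 1)) * ‖v‖ ^ 2 by push_cast; ring]
      exact this
    exact (h1.sub h2).sub h3
  have hanti : AntitoneOn g (Set.Icc 0 1) := by
    apply antitoneOn_of_deriv_nonpos (convex_Icc 0 1)
    · exact fun t _ => ((hgder t).continuousAt).continuousWithinAt
    · intro t ht
      exact ((hgder t).differentiableAt).differentiableWithinAt
    · intro t ht
      rw [interior_Icc] at ht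
      rw [(hgder t).deriv]
      have hineq : ⟪gradient f (a + t • v) - gradient f a, v⟫ ≤ L * t * ‖v‖ ^ 2 := by
        calc ⟪gradient f (a + t • v) - gradient f a, v⟫
            ≤ ‖gradient f (a + t • v) - gradient f a‖ * ‖v‖ := real_inner_le_norm _ _
          _ ≤ (L * ‖(a + t • v) - a‖) * ‖v‖ := by
              have := hlip (a + t • v) a
              have hvn : (0:ℝ) ≤ ‖v‖ := norm_nonneg _
              nlinarith
          _ = L * t * ‖v‖ ^ 2 := by
              simp [norm_smul, abs_of_pos ht.1]
              ring
      have := inner_sub_left (𝕜 := ℝ) (gradient f (a + t • v)) (gradient f a) v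
      rw [this] at hineq
      linarith
  have h01 := hanti (Set.left_mem_Icc.2 zero_le_one) (Set.right_mem_Icc.2 zero_le_one)
    zero_le_one
  simp only [hg, zero_smul, add_zero, one_smul, zero_mul, one_pow] at h01
  have hab : a + v = b := by simp [hv]
  rw [hab] at h01
  nlinarith [h01]

end aux

/-- O(1/k) convergence of gradient descent for smooth convex unconstrained minimization:
if `f` is convex and differentiable with `L`-Lipschitz gradient, `x*` is a minimizer, and
`x (k+1) = x k - λ • ∇f (x k)` with `0 < λ ≤ 1/L`, then
`f (x k) - f x* ≤ ‖x 0 - x*‖² / (2 λ k)` for all `k ≥ 1`. -/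
theorem gradient_descent_rate {m : ℕ}
    (f : EuclideanSpace ℝ (Fin m) → ℝ)
    (hconv : ConvexOn ℝ Set.univ f) (hf : Differentiable ℝ f)
    (L : ℝ) (hL : 0 < L)
    (hlip : ∀ x y, ‖gradient f x - gradient f y‖ ≤ L * ‖x - y‖)
    (xstar : EuclideanSpace ℝ (Fin m)) (hxstar : ∀ x, f xstar ≤ f x)
    (lam : ℝ) (hlam0 : 0 < lam) (hlamL : lam ≤ 1 / L)
    (x : ℕ → EuclideanSpace ℝ (Fin m))
    (hiter : ∀ k, x (k + 1) = x k - lam • gradient f (x k)) :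
    ∀ k : ℕ, 1 ≤ k → f (x k) - f xstar ≤ ‖x 0 - xstar‖ ^ 2 / (2 * lam * k) := by
  have hlamL' : lam * L ≤ 1 := by
    rw [le_div_iff₀ hL] at hlamL; linarith
  -- per-step descent
  have hstep : ∀ k : ℕ, f (x (k + 1)) ≤ f (x k) - lam / 2 * ‖gradient f (x k)‖ ^ 2 := by
    intro k
    have hd := descent_lemma f hf L hL hlip (x k) (x (k + 1))
    rw [hiter k] at hd ⊢
    have hsub : x k - lam • gradient f (x k) - x k = -(lam • gradient f (x k)) := by abel
    rw [hsub] at hd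
    have hin : ⟪gradient f (x k), -(lam • gradient f (x k))⟫ = -lam * ‖gradient f (x k)‖ ^ 2 := by
      rw [inner_neg_right, real_inner_smul_right, real_inner_self_eq_norm_sq]; ring
    have hns : ‖-(lam • gradient f (x k))‖ ^ 2 = lam ^ 2 * ‖gradient f (x k)‖ ^ 2 := by
      rw [norm_neg, norm_smul]; simp [abs_of_pos hlam0]; ring
    rw [hin, hns] at hd
    nlinarith [sq_nonneg ‖gradient f (x k)‖, sq_nonneg lam]
  -- per-step key inequality
  have hkey : ∀ k : ℕ, f (x (k + 1)) - f xstar ≤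
      (‖x k - xstar‖ ^ 2 - ‖x (k + 1) - xstar‖ ^ 2) / (2 * lam) := by
    intro k
    set g := gradient f (x k) with hgdef
    have hc := convex_first_order f hconv hf (x k) xstar
    have hexp : ‖x (k + 1) - xstar‖ ^ 2 =
        ‖x k - xstar‖ ^ 2 - 2 * lam * ⟪x k - xstar, g⟫ + lam ^ 2 * ‖g‖ ^ 2 := by
      rw [hiter k]
      have : x k - lam • g - xstar = (x k - xstar) - lam • g := by abel
      rw [this, norm_sub_sq_real, real_inner_smul_right, norm_smul, mul_pow,
        Real.norm_eq_abs, abs_of_pos hlam0]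
      ring
    have hcin : ⟪g, xstar - x k⟫ = -⟪x k - xstar, g⟫ := by
      rw [real_inner_comm g, ← neg_sub, inner_neg_right]
    rw [hcin] at hc
    have hs := hstep k
    rw [← hgdef] at hs
    rw [le_div_iff₀ (by positivity : (0:ℝ) < 2 * lam)]
    nlinarith [hs, hc, hexp]
  have hmono : ∀ k : ℕ, f (x (k + 1)) ≤ f (x k) := by
    intro k
    have := hstep k
    nlinarith [sq_nonneg ‖gradient f (x k)‖]
  -- induction
  have hind : ∀ k : ℕ, (k : ℝ) * (f (x k) - f xstar) ≤
      (‖x 0 - xstar‖ ^ 2 - ‖x k - xstar‖ ^ 2) / (2 * lam) := by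
    intro k
    induction k with
    | zero => simp
    | succ n ih =>
      have h1 := hkey n
      have h2 := hmono n
      push_cast
      have hn : (0:ℝ) ≤ (n : ℝ) := Nat.cast_nonneg n
      have : ((n : ℝ) + 1) * (f (x (n + 1)) - f xstar) ≤
          (n : ℝ) * (f (x n) - f xstar) + (f (x (n + 1)) - f xstar) := by nlinarith
      calc ((n : ℝ) + 1) * (f (x (n + 1)) - f xstar)
          ≤ (n : ℝ) * (f (x n) - f xstar) + (f (x (n + 1)) - f xstar) := this
        _ ≤ (‖x 0 - xstar‖ ^ 2 - ‖x n - xstar‖ ^ 2) / (2 * lam) +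
            (‖x n - xstar‖ ^ 2 - ‖x (n + 1) - xstar‖ ^ 2) / (2 * lam) := by
            exact add_le_add ih h1
        _ = (‖x 0 - xstar‖ ^ 2 - ‖x (n + 1) - xstar‖ ^ 2) / (2 * lam) := by ring
  intro k hk
  have hkpos : (0:ℝ) < (k : ℝ) := by exact_mod_cast hk
  have h := hind k
  have hfk : 0 ≤ f (x k) - f xstar := by linarith [hxstar (x k)]
  have hnn : 0 ≤ ‖x k - xstar‖ ^ 2 := sq_nonneg _
  rw [le_div_iff₀ (by positivity : (0:ℝ) < 2 * lam)] at h
  rw [le_div_iff₀ (show (0:ℝ) < 2 * lam * k by positivity)]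
  nlinarith
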